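/- For integers M ≥ 2 define the asymptotic efficiency η(M) of 1-D ESPRIT-type algorithms with spatial smoothing and optimal number of subarrays by: η(M) = (8/9)·M²/(M²−1) if M ≡ 0 (mod 3); η(M) = (8/9)·(M+1/2)²/(M(M+1)) if M ≡ 1 (mod 3); η(M) = (8/9)·(M−1/2)²/(M(M−1)) if M ≡ 2 (mod 3). Then: (a) η(2) = 1 and η(3) = 1; (b) η(M) < 1 for every integer M ≥ 4; and (c) η(M) → 8/9 as M → ∞. -/
import Mathlib


/-- Asymptotic efficiency of 1-D ESPRIT-type algorithms with spatial smoothing and the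
integer-optimal number of subarrays, for an `M`-sensor uniform linear array. -/
noncomputable def eta (M : ℕ) : ℝ :=
  if M % 3 = 0 then 8 / 9 * (M : ℝ) ^ 2 / ((M : ℝ) ^ 2 - 1)
  else if M % 3 = 1 then 8 / 9 * ((M : ℝ) + 1 / 2) ^ 2 / ((M : ℝ) * ((M : ℝ) + 1))
  else 8 / 9 * ((M : ℝ) - 1 / 2) ^ 2 / ((M : ℝ) * ((M : ℝ) - 1))

lemma eta_bounds (M : ℕ) (hM : 2 ≤ M) : 8 / 9 ≤ eta M ∧ eta M ≤ 8 / 9 + 2 / M := by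
  have hx : (2 : ℝ) ≤ (M : ℝ) := by exact_mod_cast hM
  set x : ℝ := (M : ℝ) with hxdef
  have hx0 : (0 : ℝ) < x := by linarith
  unfold eta
  rcases show M % 3 = 0 ∨ M % 3 = 1 ∨ M % 3 = 2 by omega with h | h | h
  · simp only [h, if_true]
    have hd : (0 : ℝ) < x ^ 2 - 1 := by nlinarith
    constructor
    · rw [div_le_div_iff₀ (by norm_num) hd] <;> nlinarith
    · rw [div_add_div _ _ (by norm_num : (9:ℝ) ≠ 0) hx0.ne', div_le_div_iff₀ hd (by positivity)]
      nlinarith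
  · simp only [h, if_true]
    norm_num
    have hd : (0 : ℝ) < x * (x + 1) := by nlinarith
    constructor
    · rw [div_le_div_iff₀ (by norm_num) hd]; nlinarith
    · rw [div_add_div _ _ (by norm_num : (9:ℝ) ≠ 0) hx0.ne', div_le_div_iff₀ hd (by positivity)]
      nlinarith
  · simp only [h]
    norm_num
    have hd : (0 : ℝ) < x * (x - 1) := by nlinarith
    constructor
    · rw [div_le_div_iff₀ (by norm_num) hd]; nlinarith
    · rw [div_add_div _ _ (by norm_num : (9:ℝ) ≠ 0) hx0.ne', div_le_div_iff₀ hd (by positivity)]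
      nlinarith

/-- (a) `η(2) = η(3) = 1`; (b) `η(M) < 1` for every integer `M ≥ 4`;
(c) `η(M) → 8/9` as `M → ∞`. -/
theorem asymptotic_efficiency :
    (eta 2 = 1 ∧ eta 3 = 1) ∧
    (∀ M : ℕ, 4 ≤ M → eta M < 1) ∧
    Filter.Tendsto eta Filter.atTop (nhds (8 / 9)) := by
  refine ⟨⟨by norm_num [eta], by norm_num [eta]⟩, ?_, ?_⟩
  · intro M hM
    have hx : (4 : ℝ) ≤ (M : ℝ) := by exact_mod_cast hM
    set x : ℝ := (M : ℝ) with hxdef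
    unfold eta
    rcases show M % 3 = 0 ∨ M % 3 = 1 ∨ M % 3 = 2 by omega with h | h | h
    · simp only [h, if_true]
      have hd : (0 : ℝ) < x ^ 2 - 1 := by nlinarith
      rw [div_lt_one hd]; nlinarith
    · simp only [h, if_true]
      norm_num
      have hd : (0 : ℝ) < x * (x + 1) := by nlinarith
      rw [div_lt_one hd]; nlinarith
    · simp only [h]
      norm_num
      have hd : (0 : ℝ) < x * (x - 1) := by nlinarith
      rw [div_lt_one hd]; nlinarith
  · have h1 : Filter.Tendsto (fun M : ℕ => (8 : ℝ) / 9 + 2 / M) Filter.atTop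
        (nhds (8 / 9)) := by
      have : Filter.Tendsto (fun M : ℕ => (2 : ℝ) / M) Filter.atTop (nhds 0) :=
        Filter.Tendsto.div_atTop tendsto_const_nhds tendsto_natCast_atTop_atTop
      simpa using tendsto_const_nhds.add this
    refine tendsto_of_tendsto_of_tendsto_of_le_of_le' tendsto_const_nhds h1 ?_ ?_
    · filter_upwards [Filter.eventually_ge_atTop 2] with M hM using (eta_bounds M hM).1
    · filter_upwards [Filter.eventually_ge_atTop 2] with M hM using (eta_bounds M hM).2
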